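/- arXiv:0808.0303 — 2 statements merged into one kernel-verified Lean document; each statement's English description precedes it below -/
import Mathlib

section
/- There exists a non-increasing C² function φ : ℝ → [0,1] with φ = 1 on (-∞, 1/2], φ = 0 on [1, ∞), and φ'' - 2(φ')²/φ ≥ -C√φ on (-∞, 1) for some constant C > 0. -/
open Real Set

lemma myMonoGlue : Monotone expNegInvGlue := by
  intro x y hxy
  rcases le_or_gt x 0 with hx | hx
  · rw [expNegInvGlue.zero_of_nonpos hx]; exact expNegInvGlue.nonneg y
  · have hy : 0 < y := hx.trans_le hxy
    simp only [expNegInvGlue, if_neg hx.not_ge, if_neg hy.not_ge]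
    exact exp_le_exp.2 (neg_le_neg (by gcongr))

lemma mySTMono : Monotone Real.smoothTransition := by
  intro x y hxy
  have hx := Real.smoothTransition.pos_denom x
  have hy := Real.smoothTransition.pos_denom y
  show expNegInvGlue x / _ ≤ expNegInvGlue y / _
  rw [div_le_div_iff₀ hx hy]
  have h1 : expNegInvGlue x ≤ expNegInvGlue y := myMonoGlue hxy
  have h2 : expNegInvGlue (1 - y) ≤ expNegInvGlue (1 - x) := myMonoGlue (by linarith)
  have h3 := expNegInvGlue.nonneg x
  have h4 := expNegInvGlue.nonneg (1 - y)
  nlinarith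

theorem stmt_7 :
    ∃ (φ : ℝ → ℝ) (C : ℝ), 0 < C ∧ ContDiff ℝ 2 φ ∧ Antitone φ ∧
      (∀ s : ℝ, φ s ∈ Icc (0 : ℝ) 1) ∧
      (∀ s : ℝ, s ≤ 1 / 2 → φ s = 1) ∧
      (∀ s : ℝ, 1 ≤ s → φ s = 0) ∧
      (∀ s : ℝ, s < 1 → 0 < φ s →
        -C * Real.sqrt (φ s) ≤ deriv (deriv φ) s - 2 * (deriv φ s) ^ 2 / φ s) := by
  set g : ℝ → ℝ := fun s => Real.smoothTransition (2 - 2 * s) with hgdef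
  have hg : ContDiff ℝ ((⊤:ℕ∞):WithTop ℕ∞) g :=
    Real.smoothTransition.contDiff.comp (contDiff_const.sub (contDiff_const.mul contDiff_id))
  have hdg : Differentiable ℝ g := hg.differentiable (by simp)
  have hg' : ContDiff ℝ ((⊤:ℕ∞):WithTop ℕ∞) (deriv g) := (contDiff_infty_iff_deriv.mp hg).2
  have hdg' : Differentiable ℝ (deriv g) := hg'.differentiable (by simp)
  have hg0 : ∀ s, 0 ≤ g s := fun s => Real.smoothTransition.nonneg _
  have hg1 : ∀ s, g s ≤ 1 := fun s => Real.smoothTransition.le_one _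
  have hgone : ∀ s : ℝ, s ≤ 1 / 2 → g s = 1 := fun s hs =>
    Real.smoothTransition.one_of_one_le (by linarith)
  have hgzero : ∀ s : ℝ, 1 ≤ s → g s = 0 := fun s hs =>
    Real.smoothTransition.zero_of_nonpos (by linarith)
  -- derivatives vanish on s < 1/2
  have hder0 : ∀ s : ℝ, s < 1 / 2 → deriv g s = 0 := by
    intro s hs
    have hev : g =ᶠ[nhds s] fun _ => (1 : ℝ) := by
      filter_upwards [Iio_mem_nhds hs] with t ht
      exact hgone t (le_of_lt ht)
    rw [hev.deriv_eq, deriv_const]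
  have hder0' : ∀ s : ℝ, s < 1 / 2 → deriv (deriv g) s = 0 := by
    intro s hs
    have hev : deriv g =ᶠ[nhds s] fun _ => (0 : ℝ) := by
      filter_upwards [Iio_mem_nhds hs] with t ht
      exact hder0 t ht
    rw [hev.deriv_eq, deriv_const]
  -- bounds
  obtain ⟨B1, hB1⟩ := isCompact_Icc.exists_bound_of_continuousOn
    (s := Icc (0:ℝ) 1) (hg'.continuous.continuousOn)
  obtain ⟨B2, hB2⟩ := isCompact_Icc.exists_bound_of_continuousOn
    (s := Icc (0:ℝ) 1) ((hg'.continuous_deriv (mod_cast le_top)).continuousOn)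
  set M1 := max B1 0 with hM1def
  set M2 := max B2 0 with hM2def
  have hM1 : ∀ s : ℝ, s < 1 → |deriv g s| ≤ M1 := by
    intro s hs
    rcases le_or_gt 0 s with h | h
    · exact le_trans (hB1 s ⟨h, hs.le⟩) (le_max_left _ _)
    · rw [hder0 s (by linarith), abs_zero]; exact le_max_right _ _
  have hM2 : ∀ s : ℝ, s < 1 → |deriv (deriv g) s| ≤ M2 := by
    intro s hs
    rcases le_or_gt 0 s with h | h
    · exact le_trans (hB2 s ⟨h, hs.le⟩) (le_max_left _ _)
    · rw [hder0' s (by linarith), abs_zero]; exact le_max_right _ _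
  refine ⟨fun s => g s ^ 4, 20 * M1 ^ 2 + 4 * M2 + 1, ?_, ?_, ?_, ?_, ?_, ?_, ?_⟩
  · have : 0 ≤ M1 := le_max_right _ _
    have : 0 ≤ M2 := le_max_right _ _
    positivity
  · exact (hg.pow 4).of_le (by norm_cast)
  · intro x y hxy
    have : g y ≤ g x := mySTMono (show 2 - 2 * y ≤ 2 - 2 * x by linarith)
    exact pow_le_pow_left₀ (hg0 y) this 4
  · intro s
    exact ⟨pow_nonneg (hg0 s) 4, pow_le_one₀ (hg0 s) (hg1 s)⟩
  · intro s hs; show g s ^ 4 = 1; rw [hgone s hs]; norm_num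
  · intro s hs; show g s ^ 4 = 0; rw [hgzero s hs]; norm_num
  · intro s hs hpos
    -- compute derivatives
    have hderφ : deriv (fun s => g s ^ 4) = fun t => 4 * g t ^ 3 * deriv g t := by
      funext t
      rw [deriv_fun_pow' (hdg t) 4]
      norm_num [Finset.sum_range_succ]
      ring
    have h1 : HasDerivAt g (deriv g s) s := (hdg s).hasDerivAt
    have h2 : HasDerivAt (deriv g) (deriv (deriv g) s) s := (hdg' s).hasDerivAt
    have h3 : HasDerivAt (fun t => 4 * g t ^ 3 * deriv g t)
        (4 * ((3 * g s ^ 2 * deriv g s) * deriv g s + g s ^ 3 * deriv (deriv g) s)) s := by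
      have := ((h1.pow 3).mul h2).const_mul (4 : ℝ)
      simp only [Nat.cast_ofNat] at this
      refine (this.congr_deriv (by simp only [Pi.pow_apply])).congr_of_eventuallyEq (Filter.Eventually.of_forall fun t => ?_)
      simp only [Pi.mul_apply, Pi.pow_apply]; ring
    have hderφ2 : deriv (deriv (fun s => g s ^ 4)) s
        = 12 * g s ^ 2 * deriv g s ^ 2 + 4 * g s ^ 3 * deriv (deriv g) s := by
      rw [hderφ, h3.deriv]; ring
    set a := g s with hadef
    set b := deriv g s with hbdef
    set c := deriv (deriv g) s with hcdef
    have ha0 : 0 ≤ a := hg0 s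
    have ha1 : a ≤ 1 := hg1 s
    have hpos' : 0 < a ^ 4 := hpos
    have hane : a ≠ 0 := fun h => by rw [h] at hpos'; norm_num at hpos'
    have hapos : 0 < a := ha0.lt_of_ne (Ne.symm hane)
    have hb : |b| ≤ M1 := hM1 s hs
    have hc : |c| ≤ M2 := hM2 s hs
    have hsqrt : Real.sqrt (a ^ 4) = a ^ 2 := by
      rw [show a ^ 4 = (a ^ 2) ^ 2 by ring, Real.sqrt_sq (sq_nonneg a)]
    have hdφ : deriv (fun s => g s ^ 4) s = 4 * a ^ 3 * b := by rw [hderφ]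
    rw [hderφ2, hdφ, hsqrt]
    have hdiv : 2 * (4 * a ^ 3 * b) ^ 2 / a ^ 4 = 32 * a ^ 2 * b ^ 2 := by
      field_simp
      ring
    rw [hdiv]
    have hb2 : b ^ 2 ≤ M1 ^ 2 := sq_le_sq' (by linarith [abs_le.mp hb]) (by linarith [abs_le.mp hb])
    have hc2 : -M2 ≤ c ∧ c ≤ M2 := abs_le.mp hc
    have hM2nn : 0 ≤ M2 := le_max_right _ _
    have e1 : 0 ≤ a ^ 2 * (M1 ^ 2 - b ^ 2) :=
      mul_nonneg (sq_nonneg a) (by linarith)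
    have e2 : -(a ^ 3) * M2 ≤ a ^ 3 * c := by nlinarith [pow_nonneg ha0 3, hc2.1]
    have e3 : 0 ≤ M2 * a ^ 2 * (1 - a) :=
      mul_nonneg (mul_nonneg hM2nn (sq_nonneg a)) (by linarith)
    nlinarith [e1, e2, e3, sq_nonneg a]
end

section
/- Let u : [0, T] → ℝ be continuous with upper Dini derivative satisfying d⁺u/dτ ≤ -(1/n) u² on [0, T], and u(0) < 0. If T ≥ n/|u(0)|, then a contradiction arises; equivalently, u(τ) ≤ n/(n u(0)^{-1} + τ) for τ < n/|u(0)|, and u(τ) → -∞ as τ → n/|u(0)|⁻. -/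
open Filter Set
open scoped Topology

/-- Riccati comparison for the upper Dini derivative inequality
`d⁺u/dτ ≤ -(1/n) u²` with `u 0 < 0`. -/
theorem stmt_8 (n T : ℝ) (hn : 0 < n) (hT : 0 < T) (u : ℝ → ℝ)
    (hu : ContinuousOn u (Icc 0 T)) (hu0 : u 0 < 0)
    (hdini : ∀ τ ∈ Ico 0 T,
      Filter.limsup (fun ε : ℝ => (u (τ + ε) - u τ) / ε) (nhdsWithin 0 (Ioi 0))
        ≤ -(1 / n) * (u τ) ^ 2) :
    ∀ τ ∈ Icc 0 T, τ < n / |u 0| → u τ ≤ n / (n / u 0 + τ) := by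
  intro τ hτ hlt
  have hτ0 : (0:ℝ) ≤ τ := hτ.1
  have hτT : τ ≤ T := hτ.2
  have hlt' : τ < -(n / u 0) := by rwa [abs_of_neg hu0, div_neg] at hlt
  have hden0 : n / u 0 + τ < 0 := by linarith
  have hgc : ContinuousOn (fun z => min (u z) 0) (Icc 0 τ) := fun x hx =>
    ((hu.mono (Icc_subset_Icc_right hτT)) x hx).min continuousWithinAt_const
  -- key estimate for every m > n
  have key : ∀ m : ℝ, n < m → u τ ≤ m / (m / u 0 + τ) := by
    intro m hm
    have hmpos : 0 < m := hn.trans hm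
    have hDτ : m / u 0 + τ < 0 := by
      have h2 : (m - n) / u 0 < 0 := div_neg_of_pos_of_neg (by linarith) hu0
      have h3 : (m - n) / u 0 = m / u 0 - n / u 0 := sub_div m n (u 0)
      linarith
    have hDneg : ∀ z ∈ Icc (0:ℝ) τ, m / u 0 + z < 0 := by
      intro z hz; have := hz.2; linarith
    -- apply the fencing lemma
    have main : ∀ ⦃x : ℝ⦄, x ∈ Icc 0 τ →
        min (u x) 0 ≤ m / (m / u 0 + x) := by
      have hf' : ∀ x ∈ Ico (0:ℝ) τ, ∀ r,
          (fun z => -(1 / n) * (min (u z) 0) ^ 2) x < r →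
          ∃ᶠ z in 𝓝[>] x, slope (fun z => min (u z) 0) x z < r := by
        intro x hx r hr
        simp only at hr
        have hxT : x ∈ Ico 0 T := ⟨hx.1, lt_of_lt_of_le hx.2 hτT⟩
        by_cases hux : u x < 0
        · have hgx : min (u x) 0 = u x := min_eq_left hux.le
          have hne : u x ≠ 0 := hux.ne
          have hsq : 0 < (u x) ^ 2 := by positivity
          have hc : -(1 / n) * (u x) ^ 2 < 0 := by
            have : 0 < (1 / n) * (u x) ^ 2 := by positivity
            linarith
          rw [hgx] at hr
          have hlim := hdini x hxT
          rw [Filter.limsup_eq] at hlim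
          have hSne : {a : ℝ | ∀ᶠ ε in 𝓝[>] (0:ℝ), (u (x + ε) - u x) / ε ≤ a}.Nonempty := by
            by_contra h
            rw [Set.not_nonempty_iff_eq_empty] at h
            rw [h, Real.sInf_empty] at hlim
            linarith
          obtain ⟨a, haS, har⟩ := exists_lt_of_csInf_lt hSne (lt_of_le_of_lt hlim hr)
          have haS' : ∀ᶠ ε in 𝓝[>] (0:ℝ), (u (x + ε) - u x) / ε ≤ a := haS
          have hev : ∀ᶠ ε in 𝓝[>] (0:ℝ), (u (x + ε) - u x) / ε < r :=
            haS'.mono fun ε h => lt_of_le_of_lt h har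
          have hmap : Tendsto (fun z : ℝ => z - x) (𝓝[>] x) (𝓝[>] (0:ℝ)) := by
            apply tendsto_nhdsWithin_of_tendsto_nhds_of_eventually_within
            · have := (continuous_sub_right x).tendsto x
              simpa using this.mono_left nhdsWithin_le_nhds
            · filter_upwards [self_mem_nhdsWithin] with z hz
              simpa [sub_pos] using hz
          have hev2 : ∀ᶠ z in 𝓝[>] x, (u (x + (z - x)) - u x) / (z - x) < r :=
            hmap.eventually hev
          apply Filter.Eventually.frequently
          filter_upwards [hev2, self_mem_nhdsWithin] with z hz hzx
          have hzx' : x < z := hzx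
          have hxz : x + (z - x) = z := by ring
          rw [hxz] at hz
          have hslope : slope (fun z => min (u z) 0) x z ≤ (u z - u x) / (z - x) := by
            rw [slope_def_field, hgx]
            have h3 : 0 < z - x := by linarith
            gcongr
            exact min_le_left _ _
          exact lt_of_le_of_lt hslope hz
        · have hgx : min (u x) 0 = 0 := min_eq_right (not_lt.mp hux)
          rw [hgx] at hr
          have hr0 : 0 < r := by simpa using hr
          apply Filter.Eventually.frequently
          filter_upwards [self_mem_nhdsWithin] with z hz
          have hzx : x < z := hz
          have : slope (fun z => min (u z) 0) x z ≤ 0 := by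
            rw [slope_def_field, hgx, sub_zero]
            exact div_nonpos_of_nonpos_of_nonneg (min_le_right _ _) (by linarith)
          linarith
      have ha : min (u 0) 0 ≤ m / (m / u 0 + 0) := by
        have hB0 : m / (m / u 0 + 0) = u 0 := by
          rw [add_zero]; field_simp
        rw [hB0]; exact min_le_left _ _
      have hBc : ContinuousOn (fun z => m / (m / u 0 + z)) (Icc 0 τ) := by
        apply continuousOn_const.div (continuousOn_const.add continuousOn_id)
        exact fun z hz => (hDneg z hz).ne
      have hB' : ∀ x ∈ Ico (0:ℝ) τ,
          HasDerivWithinAt (fun z => m / (m / u 0 + z))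
            ((fun z => -m / (m / u 0 + z) ^ 2) x) (Ici x) x := by
        intro x hx
        have hDx : m / u 0 + x ≠ 0 := (hDneg x (Ico_subset_Icc_self hx)).ne
        have hd : HasDerivAt (fun z : ℝ => m / u 0 + z) 1 x := by
          simpa using (hasDerivAt_id x).const_add (m / u 0)
        have h := (hasDerivAt_const x m).div hd hDx
        have heq : (0 * (m / u 0 + x) - m * 1) / (m / u 0 + x) ^ 2
            = -m / (m / u 0 + x) ^ 2 := by ring
        exact (heq ▸ h).hasDerivWithinAt
      have hbound : ∀ x ∈ Ico (0:ℝ) τ,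
          min (u x) 0 = m / (m / u 0 + x) →
          (fun z => -(1 / n) * (min (u z) 0) ^ 2) x
            < (fun z => -m / (m / u 0 + z) ^ 2) x := by
        intro x hx hcontact
        simp only
        have hDx : m / u 0 + x < 0 := hDneg x (Ico_subset_Icc_self hx)
        have hd2 : 0 < (m / u 0 + x) ^ 2 := pow_pos (neg_pos.mpr hDx) 2 |>.trans_eq (by ring)
        rw [hcontact, div_pow]
        rw [neg_div, neg_mul, neg_lt_neg_iff, mul_comm, mul_one_div, div_div]
        -- goal : m / (m/u0+x)^2 < m^2 / ((m/u0+x)^2 * n)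
        rw [div_lt_div_iff₀ hd2 (mul_pos hd2 hn)]
        nlinarith [mul_pos hd2 (mul_pos hmpos (sub_pos.mpr hm))]
      exact image_le_of_liminf_slope_right_lt_deriv_boundary' hgc hf' ha hBc hB' hbound
    have hgτ : min (u τ) 0 ≤ m / (m / u 0 + τ) := main (right_mem_Icc.mpr hτ0)
    have hBτ : m / (m / u 0 + τ) < 0 := div_neg_of_pos_of_neg hmpos hDτ
    rcases le_or_gt (u τ) 0 with h | h
    · rwa [min_eq_left h] at hgτ
    · rw [min_eq_right h.le] at hgτ; linarith
  -- pass to the limit m → n⁺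
  have hcont : Tendsto (fun m : ℝ => m / (m / u 0 + τ)) (𝓝[>] n) (𝓝 (n / (n / u 0 + τ))) := by
    have h : ContinuousAt (fun m : ℝ => m / (m / u 0 + τ)) n := by
      apply ContinuousAt.div continuousAt_id
      · exact (continuousAt_id.div_const (u 0)).add continuousAt_const
      · exact hden0.ne
    exact h.tendsto.mono_left nhdsWithin_le_nhds
  refine ge_of_tendsto hcont ?_
  filter_upwards [self_mem_nhdsWithin] with m hm
  exact key m hm
end
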